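/- (State error of finite imaginary-time evolution, nondegenerate case.) Fix d ≥ 2, E : Fin d → ℝ, and a distinguished index k₀ with E_{k₀} < E_k for all k ≠ k₀ (nondegenerate ground state); let Δ := min_{k ≠ k₀}(E_k − E_{k₀}) > 0. Let c : Fin d → ℂ with Σ_k |c_k|² = 1 and p₀ := |c_{k₀}|² > 0, and for β ≥ 0 let v(β) ∈ ℂ^d have components v(β)_k = c_k·e^{−βE_k}. Let w ∈ ℂ^d be the vector with w_{k₀} = c_{k₀}/|c_{k₀}| and w_k = 0 for k ≠ k₀. Then ‖v(β)/‖v(β)‖ − w‖ = sqrt( 2 − 2·(1 + Σ_{k≠k₀}(|c_k|²/p₀)·e^{−2β(E_k − E_{k₀})})^{−1/2} ) ≤ sqrt( 2 − 2·(1 + ((1 − p₀)/p₀)·e^{−2βΔ})^{−1/2} ). -/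

import Mathlib

/-- The unnormalized imaginary-time coordinate vector `v(β) ∈ ℂ^d`,
`v(β)_k = c_k·e^{−β·E_k}`, as an element of Euclidean space. -/
noncomputable def iteVec {d : ℕ} (E : Fin d → ℝ) (c : Fin d → ℂ) (β : ℝ) :
    EuclideanSpace ℂ (Fin d) :=
  (WithLp.equiv 2 (Fin d → ℂ)).symm fun k => c k * Real.exp (-(β * E k))

open Classical in
/-- The phase-matched ground eigenstate `w ∈ ℂ^d`, with `w_{k₀} = c_{k₀}/|c_{k₀}|` and
`w_k = 0` for `k ≠ k₀`. -/
noncomputable def groundPhaseVec {d : ℕ} (c : Fin d → ℂ) (k₀ : Fin d) :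
    EuclideanSpace ℂ (Fin d) :=
  (WithLp.equiv 2 (Fin d → ℂ)).symm fun k => if k = k₀ then c k₀ / (‖c k₀‖ : ℂ) else 0

/-! The target `w` is a unit vector whose inner product with `v(β)` is the positive real
number `|c_{k₀}| e^{−βE_{k₀}}`, so `‖v/‖v‖ − w‖² = 2 − 2⟪w, v⟫/‖v‖`. Factoring
`|c_{k₀}|² e^{−2βE_{k₀}}` out of `‖v‖² = ∑_k |c_k|² e^{−2βE_k}` turns this ratio into
`(1 + ∑_{k≠k₀} (|c_k|²/p₀) e^{−2β(E_k−E_{k₀})})^{−1/2}`. The bound follows because every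
excitation energy `E_k − E_{k₀}` is at least `Δ` and the excited weights sum to `1 − p₀`. -/

open RCLike in
theorem norm_inv_norm_smul_sub_of_norm_eq_one {𝕜 E : Type*} [RCLike 𝕜] [NormedAddCommGroup E]
    [InnerProductSpace 𝕜 E] [Module ℝ E] [IsScalarTower ℝ 𝕜 E] {v w : E} (hv : v ≠ 0)
    (hw : ‖w‖ = 1) :
    ‖‖v‖⁻¹ • v - w‖ = √(2 - 2 * re (inner 𝕜 w v) / ‖v‖) := by
  have hv' : ‖v‖ ≠ 0 := norm_ne_zero_iff.mpr hv
  rw [← Real.sqrt_sq (norm_nonneg _), @norm_sub_sq 𝕜, real_smul_eq_coe_smul (K := 𝕜), norm_smul,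
    norm_ofReal, abs_inv, abs_norm, inv_mul_cancel₀ hv', hw, inner_smul_real_left,
    inner_re_symm (𝕜 := 𝕜), RCLike.smul_re]
  ring_nf

theorem groundPhaseVec_eq_single {d : ℕ} (c : Fin d → ℂ) (k₀ : Fin d) :
    groundPhaseVec c k₀ = EuclideanSpace.single k₀ (c k₀ / ‖c k₀‖) := by
  ext k
  simp [groundPhaseVec]

theorem norm_groundPhaseVec {d : ℕ} {c : Fin d → ℂ} {k₀ : Fin d} (h : c k₀ ≠ 0) :
    ‖groundPhaseVec c k₀‖ = 1 := by
  simp [groundPhaseVec_eq_single, h]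

theorem inner_groundPhaseVec_iteVec {d : ℕ} (E : Fin d → ℝ) (c : Fin d → ℂ) (k₀ : Fin d)
    (β : ℝ) :
    inner ℂ (groundPhaseVec c k₀) (iteVec E c β) = ‖c k₀‖ * Real.exp (-(β * E k₀)) := by
  rw [groundPhaseVec_eq_single, EuclideanSpace.inner_single_left, map_div₀, Complex.conj_ofReal]
  change _ * (c k₀ * _) = _
  rw [div_mul_eq_mul_div, ← mul_assoc, Complex.conj_mul', mul_div_right_comm, sq,
    mul_self_div_self]

theorem iteVec_apply {d : ℕ} (E : Fin d → ℝ) (c : Fin d → ℂ) (β : ℝ) (k : Fin d) :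
    iteVec E c β k = c k * Real.exp (-(β * E k)) := rfl

theorem iteVec_ne_zero {d : ℕ} (E : Fin d → ℝ) {c : Fin d → ℂ} {k₀ : Fin d} (h : c k₀ ≠ 0)
    (β : ℝ) : iteVec E c β ≠ 0 := fun hv =>
  h (by simpa [iteVec_apply, Real.exp_ne_zero] using congrArg (· k₀) hv)

theorem norm_iteVec_sq {d : ℕ} (E : Fin d → ℝ) (c : Fin d → ℂ) (β : ℝ) :
    ‖iteVec E c β‖ ^ 2 = ∑ k, ‖c k‖ ^ 2 * Real.exp (-(2 * β * E k)) := by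
  simp_rw [EuclideanSpace.norm_sq_eq, iteVec_apply, norm_mul, Complex.norm_real,
    Real.norm_of_nonneg (Real.exp_pos _).le, mul_pow, ← Real.exp_nat_mul]
  ring_nf

theorem norm_iteVec_eq {d : ℕ} (E : Fin d → ℝ) {c : Fin d → ℂ} {k₀ : Fin d} (h : c k₀ ≠ 0)
    (β : ℝ) :
    ‖iteVec E c β‖ = ‖c k₀‖ * Real.exp (-(β * E k₀)) * √(1 + ∑ k ∈ Finset.univ.erase k₀,
      (‖c k‖ ^ 2 / ‖c k₀‖ ^ 2) * Real.exp (-(2 * β * (E k - E k₀)))) := by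
  have hc : ‖c k₀‖ ≠ 0 := norm_ne_zero_iff.mpr h
  have hterm : ∀ k, (‖c k₀‖ * Real.exp (-(β * E k₀))) ^ 2 *
      ((‖c k‖ ^ 2 / ‖c k₀‖ ^ 2) * Real.exp (-(2 * β * (E k - E k₀)))) =
      ‖c k‖ ^ 2 * Real.exp (-(2 * β * E k)) := by
    intro k
    rw [mul_pow, ← Real.exp_nat_mul, mul_mul_mul_comm, mul_div_cancel₀ _ (pow_ne_zero 2 hc),
      ← Real.exp_add]
    congr 2
    ring
  rw [← sq_eq_sq₀ (norm_nonneg _) (by positivity), mul_pow, Real.sq_sqrt (by positivity),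
    mul_add, mul_one, Finset.mul_sum, Finset.sum_congr rfl fun k _ => hterm k, norm_iteVec_sq,
    ← Finset.add_sum_erase _ _ (Finset.mem_univ k₀), mul_pow, ← Real.exp_nat_mul]
  ring_nf

theorem sum_erase_weight_exp_le {d : ℕ} {E : Fin d → ℝ} {k₀ : Fin d} {Δ : ℝ}
    (hΔ : Δ ∈ lowerBounds ((fun k => E k - E k₀) '' {k | k ≠ k₀})) {c : Fin d → ℂ}
    (hnorm : ∑ k, ‖c k‖ ^ 2 = 1) {β : ℝ} (hβ : 0 ≤ β) :
    ∑ k ∈ Finset.univ.erase k₀, (‖c k‖ ^ 2 / ‖c k₀‖ ^ 2) * Real.exp (-(2 * β * (E k - E k₀))) ≤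
      (1 - ‖c k₀‖ ^ 2) / ‖c k₀‖ ^ 2 * Real.exp (-(2 * β * Δ)) := by
  have hrest : ∑ k ∈ Finset.univ.erase k₀, ‖c k‖ ^ 2 = 1 - ‖c k₀‖ ^ 2 := by
    rw [← hnorm, ← Finset.add_sum_erase _ _ (Finset.mem_univ k₀), add_sub_cancel_left]
  calc ∑ k ∈ Finset.univ.erase k₀, (‖c k‖ ^ 2 / ‖c k₀‖ ^ 2) * Real.exp (-(2 * β * (E k - E k₀)))
      ≤ ∑ k ∈ Finset.univ.erase k₀, (‖c k‖ ^ 2 / ‖c k₀‖ ^ 2) * Real.exp (-(2 * β * Δ)) := by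
        refine Finset.sum_le_sum fun k hk => ?_
        have hgap : Δ ≤ E k - E k₀ := hΔ ⟨k, Finset.ne_of_mem_erase hk, rfl⟩
        gcongr
    _ = (1 - ‖c k₀‖ ^ 2) / ‖c k₀‖ ^ 2 * Real.exp (-(2 * β * Δ)) := by
        rw [← Finset.sum_mul, ← Finset.sum_div, hrest]

theorem sqrt_two_sub_two_mul_inv_sqrt_le {x y : ℝ} (hx : 0 < x) (hxy : x ≤ y) :
    √(2 - 2 * (√x)⁻¹) ≤ √(2 - 2 * (√y)⁻¹) := by
  have hsqrt : 0 < √x := Real.sqrt_pos.mpr hx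
  gcongr

theorem finite_ite_state_error_general {d : ℕ}
    (E : Fin d → ℝ) (k₀ : Fin d)
    (Δ : ℝ) (hΔ : IsLeast ((fun k => E k - E k₀) '' {k | k ≠ k₀}) Δ)
    (c : Fin d → ℂ) (hnorm : ∑ k, ‖c k‖ ^ 2 = 1) (hp₀ : 0 < ‖c k₀‖ ^ 2)
    (β : ℝ) (hβ : 0 ≤ β) :
    ‖‖iteVec E c β‖⁻¹ • iteVec E c β - groundPhaseVec c k₀‖ =
      Real.sqrt (2 - 2 *
        (Real.sqrt (1 + ∑ k ∈ Finset.univ.erase k₀,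
          (‖c k‖ ^ 2 / ‖c k₀‖ ^ 2) * Real.exp (-(2 * β * (E k - E k₀)))))⁻¹) ∧
    ‖‖iteVec E c β‖⁻¹ • iteVec E c β - groundPhaseVec c k₀‖ ≤
      Real.sqrt (2 - 2 *
        (Real.sqrt (1 + ((1 - ‖c k₀‖ ^ 2) / ‖c k₀‖ ^ 2) * Real.exp (-(2 * β * Δ))))⁻¹) := by
  have hc : c k₀ ≠ 0 := by rintro h; simp [h] at hp₀
  have ha : ‖c k₀‖ * Real.exp (-(β * E k₀)) ≠ 0 :=
    mul_ne_zero (norm_ne_zero_iff.mpr hc) (Real.exp_ne_zero _)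
  have herr : ‖‖iteVec E c β‖⁻¹ • iteVec E c β - groundPhaseVec c k₀‖ =
      √(2 - 2 * (√(1 + ∑ k ∈ Finset.univ.erase k₀,
        (‖c k‖ ^ 2 / ‖c k₀‖ ^ 2) * Real.exp (-(2 * β * (E k - E k₀)))))⁻¹) := by
    rw [norm_inv_norm_smul_sub_of_norm_eq_one (𝕜 := ℂ) (iteVec_ne_zero E hc β)
      (norm_groundPhaseVec hc), inner_groundPhaseVec_iteVec, ← Complex.ofReal_mul,
      RCLike.re_to_complex, Complex.ofReal_re, norm_iteVec_eq E hc β, mul_div_assoc,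
      div_mul_cancel_left₀ ha]
  refine ⟨herr, herr ▸ sqrt_two_sub_two_mul_inv_sqrt_le (by positivity) ?_⟩
  linarith [sum_erase_weight_exp_le hΔ.2 hnorm hβ]

/-- State error of finite imaginary-time evolution, nondegenerate case:
for `d ≥ 2`, a nondegenerate ground index `k₀` (`E_{k₀} < E_k` for `k ≠ k₀`), gap
`Δ = min_{k ≠ k₀}(E_k − E_{k₀}) > 0`, amplitudes `c` with `∑_k|c_k|² = 1` and
`p₀ = |c_{k₀}|² > 0`, and `β ≥ 0`, the state error satisfies
`‖v(β)/‖v(β)‖ − w‖ = √(2 − 2·(1 + ∑_{k≠k₀}(|c_k|²/p₀)·e^{−2β(E_k−E_{k₀})})^{−1/2})`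
and is bounded by `√(2 − 2·(1 + ((1−p₀)/p₀)·e^{−2βΔ})^{−1/2})`. -/
theorem finite_ite_state_error {d : ℕ} (hd : 2 ≤ d)
    (E : Fin d → ℝ) (k₀ : Fin d) (hground : ∀ k, k ≠ k₀ → E k₀ < E k)
    (Δ : ℝ) (hΔ : IsLeast ((fun k => E k - E k₀) '' {k | k ≠ k₀}) Δ) (hΔpos : 0 < Δ)
    (c : Fin d → ℂ) (hnorm : ∑ k, ‖c k‖ ^ 2 = 1) (hp₀ : 0 < ‖c k₀‖ ^ 2)
    (β : ℝ) (hβ : 0 ≤ β) :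
    ‖‖iteVec E c β‖⁻¹ • iteVec E c β - groundPhaseVec c k₀‖ =
      Real.sqrt (2 - 2 *
        (Real.sqrt (1 + ∑ k ∈ Finset.univ.erase k₀,
          (‖c k‖ ^ 2 / ‖c k₀‖ ^ 2) * Real.exp (-(2 * β * (E k - E k₀)))))⁻¹) ∧
    ‖‖iteVec E c β‖⁻¹ • iteVec E c β - groundPhaseVec c k₀‖ ≤
      Real.sqrt (2 - 2 *
        (Real.sqrt (1 + ((1 - ‖c k₀‖ ^ 2) / ‖c k₀‖ ^ 2) * Real.exp (-(2 * β * Δ))))⁻¹) :=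
  finite_ite_state_error_general E k₀ Δ hΔ c hnorm hp₀ β hβ
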